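/- Let V and W be finite-dimensional vector spaces over the same field F with bases {α₁,...,αₙ} and {β₁,...,β_k}. If Γ(V_α) and Γ(W_β) are isomorphic as graphs, then dim V = dim W. -/

import Mathlib

/-!
The basis vectors of `V` form an independent set of size `n` in `Γ(V_α)`, and every independent
set of `Γ(W_β)` has at most `k` elements: choosing for each of its vertices a coordinate where it is
non-zero gives an injection into the `k` coordinates, since two vertices sharing such a coordinate
are adjacent. A graph isomorphism carries the former onto an independent set, so `n ≤ k`, and
symmetrically `k ≤ n`.
-/

/-- The non-zero component graph of a vector space `V` with respect to a basis `b`: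
vertices are the non-zero vectors, and two distinct vectors are adjacent iff they have a
common basis vector with non-zero coefficient in their basis representations. -/
def NZCG {F V : Type*} [Field F] [AddCommGroup V] [Module F V] {n : ℕ}
    (b : Module.Basis (Fin n) F V) : SimpleGraph {v : V // v ≠ 0} where
  Adj x y := x ≠ y ∧ ∃ i, b.repr x.1 i ≠ 0 ∧ b.repr y.1 i ≠ 0
  symm := by
    constructor
    rintro x y ⟨hxy, i, h1, h2⟩
    exact ⟨hxy.symm, i, h2, h1⟩
  loopless := by
    constructor
    rintro x ⟨h, _⟩
    exact h rfl

namespace NZCG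

variable {F V : Type*} [Field F] [AddCommGroup V] [Module F V] {n : ℕ}
  (b : Module.Basis (Fin n) F V)

noncomputable def basisVertex (i : Fin n) : {v : V // v ≠ 0} := ⟨b i, b.ne_zero i⟩

lemma basisVertex_injective : Function.Injective (basisVertex b) :=
  fun _ _ h => b.injective (congrArg Subtype.val h)

lemma not_adj_basisVertex (i j : Fin n) : ¬ (NZCG b).Adj (basisVertex b i) (basisVertex b j) := by
  rintro ⟨hne, l, hi, hj⟩
  simp only [basisVertex, Module.Basis.repr_self, Finsupp.single_apply_ne_zero] at hi hj
  exact hne (congrArg (basisVertex b) (hi.1.symm.trans hj.1))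

lemma exists_repr_ne_zero (x : {v : V // v ≠ 0}) : ∃ i, b.repr x.1 i ≠ 0 := by
  by_contra! h
  exact x.2 (b.repr.map_eq_zero_iff.mp (Finsupp.ext h))

lemma card_le_of_pairwise_not_adj {ι : Type*} [Fintype ι] (s : ι → {v : V // v ≠ 0})
    (hs : Function.Injective s) (hindep : ∀ i j, ¬ (NZCG b).Adj (s i) (s j)) :
    Fintype.card ι ≤ n := by
  choose f hf using fun i => exists_repr_ne_zero b (s i)
  have hf_inj : Function.Injective f := by
    intro i j hij
    by_contra hne
    exact hindep i j ⟨hs.ne hne, f i, hf i, hij ▸ hf j⟩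
  simpa using Fintype.card_le_of_injective f hf_inj

lemma dim_le_of_iso {W : Type*} [AddCommGroup W] [Module F W] {k : ℕ}
    (c : Module.Basis (Fin k) F W) (e : NZCG b ≃g NZCG c) : n ≤ k := by
  simpa using card_le_of_pairwise_not_adj c (e ∘ basisVertex b)
    (e.injective.comp (basisVertex_injective b))
    (fun i j => e.map_adj_iff.not.mpr (not_adj_basisVertex b i j))

end NZCG

theorem nzcg_iso_implies_eq_dim {F V W : Type*} [Field F] [AddCommGroup V] [Module F V]
    [AddCommGroup W] [Module F W] {n k : ℕ}
    (bα : Module.Basis (Fin n) F V) (bβ : Module.Basis (Fin k) F W)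
    (h : Nonempty (NZCG bα ≃g NZCG bβ)) : n = k := by
  obtain ⟨e⟩ := h
  exact le_antisymm (NZCG.dim_le_of_iso bα bβ e) (NZCG.dim_le_of_iso bβ bα e.symm)
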